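/- arXiv:1907.00628 — 5 statements merged into one kernel-verified Lean document; each statement's English description precedes it below -/
import Mathlib

section
/- For all real numbers h > 0, k > 0 and N with 0 < N < 1, one has (4N²/k)(cosh(kh) − 1) < 2h·sinh(kh). Consequently, the determinant of the 2×2 matrix Q = [[(2N²/k)sinh(kh) − 2h, (2N²/k)(cosh(kh) − 1)], [cosh(kh) − 1, sinh(kh)]], which equals D := −2h·sinh(kh) + (4N²/k)(cosh(kh) − 1), is strictly negative; in particular Q is invertible. -/
/-!
Write `x = kh`. Half-angle formulas turn `2 (cosh x − 1) ≤ x sinh x` into `tanh (x/2) ≤ x/2`,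
which holds because `u cosh u − sinh u` has derivative `u sinh u ≥ 0`. Since `N² < 1` and
`cosh x > 1`, this gives `4N² (cosh x − 1) < 2 x sinh x`, i.e. `D < 0` after dividing by `k`.
The determinant of `Q` is `D` by `sinh² x − (cosh x − 1)² = 2 (cosh x − 1)`.
-/

open Real Set

theorem Real.mul_cosh_sub_sinh_monotoneOn : MonotoneOn (fun x => x * cosh x - sinh x) (Ici 0) := by
  refine monotoneOn_of_deriv_nonneg (convex_Ici 0) (by fun_prop) (by fun_prop) fun x hx => ?_
  rw [interior_Ici, mem_Ioi] at hx
  have hderiv : HasDerivAt (fun x => x * cosh x - sinh x) (1 * cosh x + x * sinh x - cosh x) x :=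
    ((hasDerivAt_id x).mul (hasDerivAt_cosh x)).sub (hasDerivAt_sinh x)
  rw [hderiv.deriv]
  nlinarith [mul_pos hx (sinh_pos_iff.2 hx)]

theorem Real.sinh_le_mul_cosh {x : ℝ} (hx : 0 ≤ x) : sinh x ≤ x * cosh x := by
  have := mul_cosh_sub_sinh_monotoneOn self_mem_Ici hx hx
  simp only [zero_mul, sinh_zero, sub_zero] at this
  linarith

theorem Real.two_mul_cosh_sub_one_le_mul_sinh {x : ℝ} (hx : 0 ≤ x) :
    2 * (cosh x - 1) ≤ x * sinh x := by
  set u := x / 2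
  have hu : 0 ≤ u := by positivity
  have hcosh : cosh x - 1 = 2 * sinh u ^ 2 := by
    rw [show x = 2 * u by ring, cosh_two_mul, cosh_sq]; ring
  have hsinh : x * sinh x = 4 * sinh u * (u * cosh u) := by
    rw [show x = 2 * u by ring, sinh_two_mul]; ring
  rw [hcosh, hsinh]
  nlinarith [mul_le_mul_of_nonneg_left (sinh_le_mul_cosh hu) (sinh_nonneg_iff.2 hu)]

theorem Real.sinh_sq_sub_cosh_sub_one_sq (x : ℝ) :
    sinh x ^ 2 - (cosh x - 1) ^ 2 = 2 * (cosh x - 1) := by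
  linear_combination -cosh_sq x

theorem Real.det_fin_two_sinh_cosh_sub_one (a b x : ℝ) :
    (!![a * sinh x - b, a * (cosh x - 1); cosh x - 1, sinh x] : Matrix (Fin 2) (Fin 2) ℝ).det =
      -b * sinh x + 2 * a * (cosh x - 1) := by
  rw [Matrix.det_fin_two_of]
  linear_combination a * sinh_sq_sub_cosh_sub_one_sq x

/-- For `h, k > 0` and `0 < N < 1` one has
`(4N²/k)(cosh(kh) − 1) < 2h sinh(kh)`; consequently the determinant of the
matrix `Q` arising in the Appendix equals `D = −2h sinh(kh) + (4N²/k)(cosh(kh) − 1)`,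
is strictly negative, and `Q` is invertible. -/
theorem detQ_neg (h k N : ℝ) (hh : 0 < h) (hk : 0 < k) (hN0 : 0 < N) (hN1 : N < 1) :
    (4 * N ^ 2 / k) * (Real.cosh (k * h) - 1) < 2 * h * Real.sinh (k * h) ∧
    (!![(2 * N ^ 2 / k) * Real.sinh (k * h) - 2 * h,
        (2 * N ^ 2 / k) * (Real.cosh (k * h) - 1);
        Real.cosh (k * h) - 1, Real.sinh (k * h)] : Matrix (Fin 2) (Fin 2) ℝ).det =
      -2 * h * Real.sinh (k * h) + (4 * N ^ 2 / k) * (Real.cosh (k * h) - 1) ∧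
    -2 * h * Real.sinh (k * h) + (4 * N ^ 2 / k) * (Real.cosh (k * h) - 1) < 0 ∧
    IsUnit (!![(2 * N ^ 2 / k) * Real.sinh (k * h) - 2 * h,
        (2 * N ^ 2 / k) * (Real.cosh (k * h) - 1);
        Real.cosh (k * h) - 1, Real.sinh (k * h)] : Matrix (Fin 2) (Fin 2) ℝ) := by
  have hx : 0 < k * h := mul_pos hk hh
  have hN : N ^ 2 < 1 := pow_lt_one₀ hN0.le hN1 two_ne_zero
  have hcosh : 0 < cosh (k * h) - 1 := sub_pos.2 (one_lt_cosh.2 hx.ne')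
  have hineq : 4 * N ^ 2 / k * (cosh (k * h) - 1) < 2 * h * sinh (k * h) := by
    rw [div_mul_eq_mul_div, div_lt_iff₀ hk]
    nlinarith [two_mul_cosh_sub_one_le_mul_sinh hx.le]
  have hdet := det_fin_two_sinh_cosh_sub_one (2 * N ^ 2 / k) (2 * h) (k * h)
  rw [show 2 * (2 * N ^ 2 / k) = 4 * N ^ 2 / k by ring, ← neg_mul] at hdet
  have hD : -2 * h * sinh (k * h) + 4 * N ^ 2 / k * (cosh (k * h) - 1) < 0 := by linarith
  refine ⟨hineq, hdet, hD, ?_⟩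
  rw [Matrix.isUnit_iff_isUnit_det, hdet, isUnit_iff_ne_zero]
  exact hD.ne
end

section
/- Let N ∈ (0,1), R_c > 0, h > 0, k = 2N√((1−N²)/R_c) and q ∈ ℝ. Define u, w : ℝ → ℝ by u(t) = (q/(2(1−N²)))·(t² − h t + (hN²/k)(sinh(kt) − (cosh(kt) − 1)·coth(kh/2))) and w(t) = (q/(4(1−N²)))·(2t + h(cosh(kt) − 1 − coth(kh/2)·sinh(kt))). Then for every t one has u''(t) = q + 2N² w'(t) and −R_c w''(t) + 4N² w(t) − 2N² u'(t) = 0, and moreover u(0) = u(h) = w(0) = w(h) = 0. -/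
/-!
Both `u` and `w` lie in the span of `t², t, 1, cosh (k t), sinh (k t)`, which differentiation maps
into itself, so the two differential equations reduce to identities between coefficients; the only
relation among the parameters they need is `R_c k² = 4 N² (1 - N²)`. The boundary values at `h`
come from the double-angle formulas, which give `sinh 2x = (cosh 2x - 1) coth x` and
`cosh 2x - 1 - coth x sinh 2x = -2`.
-/

/-- `coth x = cosh x / sinh x`. -/
noncomputable def cothR (x : ℝ) : ℝ := Real.cosh x / Real.sinh x

open Real

theorem sinh_two_mul_sub_cosh_two_mul_sub_one_mul_cothR {x : ℝ} (hx : x ≠ 0) :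
    sinh (2 * x) - (cosh (2 * x) - 1) * cothR x = 0 := by
  have hs : sinh x ≠ 0 := sinh_ne_zero.mpr hx
  rw [cothR, sinh_two_mul, cosh_two_mul]
  field_simp
  linear_combination (-cosh x) * cosh_sq_sub_sinh_sq x

theorem cosh_two_mul_sub_one_sub_cothR_mul_sinh_two_mul {x : ℝ} (hx : x ≠ 0) :
    cosh (2 * x) - 1 - cothR x * sinh (2 * x) = -2 := by
  have hs : sinh x ≠ 0 := sinh_ne_zero.mpr hx
  rw [cothR, sinh_two_mul, cosh_two_mul]
  field_simp
  linear_combination -cosh_sq_sub_sinh_sq x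

noncomputable def quadCoshSinh (k a b c α β : ℝ) (t : ℝ) : ℝ :=
  a * t ^ 2 + b * t + c + α * cosh (k * t) + β * sinh (k * t)

theorem hasDerivAt_quadCoshSinh (k a b c α β t : ℝ) :
    HasDerivAt (quadCoshSinh k a b c α β) (quadCoshSinh k 0 (2 * a) b (k * β) (k * α) t) t := by
  have hlin : HasDerivAt (fun s : ℝ => k * s) k t := by
    simpa using (hasDerivAt_id t).const_mul k
  have hquad := ((hasDerivAt_pow 2 t).const_mul a).add ((hasDerivAt_id t).const_mul b)
  refine (((hquad.add_const c).add ((hasDerivAt_cosh (k * t)).comp t hlin |>.const_mul α)).add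
    ((hasDerivAt_sinh (k * t)).comp t hlin |>.const_mul β)).congr_deriv ?_
  simp only [quadCoshSinh]
  norm_num
  ring

theorem deriv_quadCoshSinh (k a b c α β : ℝ) :
    deriv (quadCoshSinh k a b c α β) = quadCoshSinh k 0 (2 * a) b (k * β) (k * α) :=
  funext fun t => (hasDerivAt_quadCoshSinh k a b c α β t).deriv

/-- Explicit solution of the reduced micropolar boundary-value problem with
pressure-gradient forcing `q` (and no microrotation forcing): the given
`u, w` satisfy `u'' = q + 2N² w'`, `−R_c w'' + 4N² w − 2N² u' = 0`, and the
homogeneous boundary conditions at `0` and `h`. -/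
theorem reduced_micropolar_solution_pressure
    (N Rc h q : ℝ) (hN0 : 0 < N) (hN1 : N < 1) (hRc : 0 < Rc) (hh : 0 < h)
    (k : ℝ) (hk : k = 2 * N * Real.sqrt ((1 - N ^ 2) / Rc))
    (u w : ℝ → ℝ)
    (hu : u = fun t => (q / (2 * (1 - N ^ 2))) *
      (t ^ 2 - h * t + (h * N ^ 2 / k) *
        (Real.sinh (k * t) - (Real.cosh (k * t) - 1) * cothR (k * h / 2))))
    (hw : w = fun t => (q / (4 * (1 - N ^ 2))) *
      (2 * t + h * (Real.cosh (k * t) - 1 - cothR (k * h / 2) * Real.sinh (k * t)))) :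
    (∀ t : ℝ, deriv (deriv u) t = q + 2 * N ^ 2 * deriv w t) ∧
    (∀ t : ℝ, -Rc * deriv (deriv w) t + 4 * N ^ 2 * w t - 2 * N ^ 2 * deriv u t = 0) ∧
    u 0 = 0 ∧ u h = 0 ∧ w 0 = 0 ∧ w h = 0 := by
  have hN : 0 < 1 - N ^ 2 := by nlinarith
  have hk0 : 0 < k := hk ▸ mul_pos (by positivity) (sqrt_pos.mpr (div_pos hN hRc))
  have hRc' : Rc = 4 * N ^ 2 * (1 - N ^ 2) / k ^ 2 := by
    rw [hk, mul_pow, mul_pow, sq_sqrt (div_pos hN hRc).le]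
    field_simp
    norm_num
  have hkh : k * h = 2 * (k * h / 2) := by ring
  have hkh0 : k * h / 2 ≠ 0 := by positivity
  set c := cothR (k * h / 2)
  set A := q / (2 * (1 - N ^ 2))
  set B := q / (4 * (1 - N ^ 2))
  have hu' : u = quadCoshSinh k A (-A * h) (A * (h * N ^ 2 / k) * c)
      (-A * (h * N ^ 2 / k) * c) (A * (h * N ^ 2 / k)) := by
    rw [hu]; funext t; simp only [quadCoshSinh]; ring
  have hw' : w = quadCoshSinh k 0 (2 * B) (-B * h) (B * h) (-B * h * c) := by
    rw [hw]; funext t; simp only [quadCoshSinh]; ring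
  refine ⟨fun t => ?_, fun t => ?_, ?_, ?_, ?_, ?_⟩
  · rw [hu', hw', deriv_quadCoshSinh, deriv_quadCoshSinh, deriv_quadCoshSinh]
    simp only [quadCoshSinh, A, B]
    field_simp
    ring
  · rw [hu', hw', deriv_quadCoshSinh, deriv_quadCoshSinh, deriv_quadCoshSinh]
    simp only [quadCoshSinh, A, B, hRc']
    field_simp
    ring
  · simp [hu]
  · simp only [hu]
    rw [hkh, sinh_two_mul_sub_cosh_two_mul_sub_one_mul_cothR hkh0]
    ring
  · simp [hw]
  · simp only [hw]
    rw [hkh, cosh_two_mul_sub_one_sub_cothR_mul_sinh_two_mul hkh0]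
    ring
end

section
/- Let N ∈ (0,1), R_c > 0, h > 0, k = 2N√((1−N²)/R_c) and q ∈ ℝ, and let u(t) = (q/(2(1−N²)))·(t² − h t + (hN²/k)(sinh(kt) − (cosh(kt) − 1)·coth(kh/2))). Then ∫₀^h u(t) dt = −(h³/(1−N²))·Φ(h,N,R_c)·q, where Φ(h,N,R_c) = 1/12 + R_c/(4h²(1−N²)) − (1/(4h))·√(N²R_c/(1−N²))·coth(N h √((1−N²)/R_c)). -/
/-- The coefficient function `Φ(h,N,R_c)` of the micropolar Reynolds equation. -/
noncomputable def Phi (h N Rc : ℝ) : ℝ :=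
  1 / 12 + Rc / (4 * h ^ 2 * (1 - N ^ 2)) -
    (1 / (4 * h)) * Real.sqrt (N ^ 2 * Rc / (1 - N ^ 2)) *
      cothR (N * h * Real.sqrt ((1 - N ^ 2) / Rc))

/-!
The hyperbolic part integrates to
`(cosh (k h) - 1) / k - coth (k h / 2) (sinh (k h) / k - h)`, which the half-angle formulas
collapse to `h coth (k h / 2) - 2 / k`. What remains is to rewrite `Φ` through `k`:
`k² = 4 N² (1 - N²) / R_c`, and `√(N² R_c / (1 - N²)) = N / √((1 - N²) / R_c) = 2 N² / k`.
-/

open Real intervalIntegral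

theorem integral_sinh_mul {k : ℝ} (hk : k ≠ 0) (a b : ℝ) :
    ∫ t in a..b, sinh (k * t) = (cosh (k * b) - cosh (k * a)) / k := by
  have hderiv (t : ℝ) : HasDerivAt (fun t => cosh (k * t) / k) (sinh (k * t)) t :=
    (((hasDerivAt_id' t).const_mul k).cosh.div_const k).congr_deriv (by field_simp)
  rw [integral_eq_sub_of_hasDerivAt (fun t _ => hderiv t)
    ((by fun_prop : Continuous _).intervalIntegrable _ _)]
  ring

theorem integral_cosh_mul {k : ℝ} (hk : k ≠ 0) (a b : ℝ) :
    ∫ t in a..b, cosh (k * t) = (sinh (k * b) - sinh (k * a)) / k := by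
  have hderiv (t : ℝ) : HasDerivAt (fun t => sinh (k * t) / k) (cosh (k * t)) t :=
    (((hasDerivAt_id' t).const_mul k).sinh.div_const k).congr_deriv (by field_simp)
  rw [integral_eq_sub_of_hasDerivAt (fun t _ => hderiv t)
    ((by fun_prop : Continuous _).intervalIntegrable _ _)]
  ring

theorem integral_sq_sub_mul_self (h : ℝ) : ∫ t in (0 : ℝ)..h, (t ^ 2 - h * t) = -h ^ 3 / 6 := by
  rw [integral_sub ((by fun_prop : Continuous _).intervalIntegrable _ _)
    ((by fun_prop : Continuous _).intervalIntegrable _ _), integral_const_mul, integral_pow,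
    integral_id]
  ring

theorem integral_sinh_mul_sub_cosh_mul_sub_one_mul_cothR {k h : ℝ} (hk : k ≠ 0) (hh : h ≠ 0) :
    ∫ t in (0 : ℝ)..h, (sinh (k * t) - (cosh (k * t) - 1) * cothR (k * h / 2)) =
      h * cothR (k * h / 2) - 2 / k := by
  have hs : sinh (k * h / 2) ≠ 0 := sinh_ne_zero.mpr (by positivity)
  have hkh : k * h = 2 * (k * h / 2) := by ring
  rw [integral_sub ((by fun_prop : Continuous _).intervalIntegrable _ _)
      ((by fun_prop : Continuous _).intervalIntegrable _ _), integral_mul_const,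
    integral_sub ((by fun_prop : Continuous _).intervalIntegrable _ _) intervalIntegrable_const,
    integral_sinh_mul hk, integral_cosh_mul hk, integral_const, hkh, cosh_two_mul, sinh_two_mul,
    cothR]
  simp only [mul_zero, cosh_zero, sinh_zero, sub_zero, smul_eq_mul, mul_one]
  field_simp
  linear_combination (-sinh (k * h / 2)) * cosh_sq_sub_sinh_sq (k * h / 2)

theorem Phi_eq_of_eq_two_mul_sqrt {N Rc k : ℝ} (h : ℝ) (hN0 : 0 < N) (hN1 : N < 1)
    (hRc : 0 < Rc) (hk : k = 2 * N * sqrt ((1 - N ^ 2) / Rc)) :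
    Phi h N Rc = 1 / 12 + N ^ 2 / (h ^ 2 * k ^ 2) - N ^ 2 / (2 * h * k) * cothR (k * h / 2) := by
  have h1N : 0 < 1 - N ^ 2 := by nlinarith
  have ha : 0 < sqrt ((1 - N ^ 2) / Rc) := sqrt_pos.mpr (by positivity)
  have hk2 : k ^ 2 = 4 * N ^ 2 * (1 - N ^ 2) / Rc := by
    rw [hk, mul_pow, sq_sqrt (by positivity)]
    ring
  have hsqrt : sqrt (N ^ 2 * Rc / (1 - N ^ 2)) = N / sqrt ((1 - N ^ 2) / Rc) := by
    rw [eq_div_iff ha.ne', ← sqrt_mul (by positivity),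
      show N ^ 2 * Rc / (1 - N ^ 2) * ((1 - N ^ 2) / Rc) = N ^ 2 by field_simp]
    exact sqrt_sq hN0.le
  have harg : N * h * sqrt ((1 - N ^ 2) / Rc) = k * h / 2 := by
    rw [hk]
    ring
  rw [Phi, hsqrt, harg, hk2, hk]
  field_simp
  ring

/-- Integral of the velocity component of the explicit solution with
pressure-gradient forcing `q`: `∫₀ʰ u = −(h³/(1−N²)) Φ(h,N,R_c) q`. -/
theorem integral_u_pressure_forcing
    (N Rc h q : ℝ) (hN0 : 0 < N) (hN1 : N < 1) (hRc : 0 < Rc) (hh : 0 < h)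
    (k : ℝ) (hk : k = 2 * N * Real.sqrt ((1 - N ^ 2) / Rc))
    (u : ℝ → ℝ)
    (hu : u = fun t => (q / (2 * (1 - N ^ 2))) *
      (t ^ 2 - h * t + (h * N ^ 2 / k) *
        (Real.sinh (k * t) - (Real.cosh (k * t) - 1) * cothR (k * h / 2)))) :
    ∫ t in (0 : ℝ)..h, u t = -(h ^ 3 / (1 - N ^ 2)) * Phi h N Rc * q := by
  have h1N : 0 < 1 - N ^ 2 := by nlinarith
  have hk0 : k ≠ 0 := by
    have : 0 < sqrt ((1 - N ^ 2) / Rc) := sqrt_pos.mpr (div_pos h1N hRc)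
    rw [hk]
    positivity
  subst hu
  rw [integral_const_mul, integral_add ((by fun_prop : Continuous _).intervalIntegrable _ _)
      ((by fun_prop : Continuous _).intervalIntegrable _ _), integral_const_mul,
    integral_sq_sub_mul_self, integral_sinh_mul_sub_cosh_mul_sub_one_mul_cothR hk0 hh.ne',
    Phi_eq_of_eq_two_mul_sqrt h hN0 hN1 hRc hk]
  field_simp
  ring
end

section
/- Let N ∈ (0,1), R_c > 0, h > 0, k = 2N√((1−N²)/R_c) and q ∈ ℝ, and let w(t) = (q/(4(1−N²)))·(2t + h(cosh(kt) − 1 − coth(kh/2)·sinh(kt))). Then ∫₀^h w(t) dt = 0. -/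
open Real

/-- `coth 0` is the junk value `0`, and both sides then vanish. -/
theorem cothR_mul_cosh_two_mul_sub_one (x : ℝ) :
    cothR x * (cosh (2 * x) - 1) = sinh (2 * x) := by
  rcases eq_or_ne (sinh x) 0 with hx | hx
  · simp [cothR, sinh_two_mul, hx]
  · rw [cothR, cosh_two_mul, cosh_sq, sinh_two_mul]
    field_simp
    ring

theorem integral_two_mul_add_cosh_sub_sinh {k : ℝ} (hk : k ≠ 0) (h C a b : ℝ) :
    ∫ t in a..b, (2 * t + h * (cosh (k * t) - 1 - C * sinh (k * t))) =
      (b ^ 2 + h * (sinh (k * b) / k - b - C * cosh (k * b) / k)) -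
        (a ^ 2 + h * (sinh (k * a) / k - a - C * cosh (k * a) / k)) := by
  apply intervalIntegral.integral_eq_sub_of_hasDerivAt
  · intro t _
    have hlin : HasDerivAt (fun t => k * t) k t := by simpa using (hasDerivAt_id t).const_mul k
    convert (hasDerivAt_pow 2 t).fun_add (((hlin.sinh.div_const k).fun_sub
      (hasDerivAt_id' t)).fun_sub ((hlin.cosh.const_mul C).div_const k) |>.const_mul h) using 1
    field_simp
    ring
  · exact Continuous.intervalIntegrable (by fun_prop) a b

theorem integral_two_mul_add_cosh_sub_cothR_mul_sinh {k : ℝ} (hk : k ≠ 0) (h : ℝ) :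
    ∫ t in (0 : ℝ)..h, (2 * t + h * (cosh (k * t) - 1 - cothR (k * h / 2) * sinh (k * t))) = 0 := by
  have hdouble := cothR_mul_cosh_two_mul_sub_one (k * h / 2)
  rw [mul_div_cancel₀ _ two_ne_zero] at hdouble
  rw [integral_two_mul_add_cosh_sub_sinh hk]
  simp only [mul_zero, sinh_zero, cosh_zero]
  linear_combination (-h / k) * hdouble

theorem integral_w_pressure_forcing_general
    (N Rc h q : ℝ) (hN0 : 0 < N) (hN1 : N < 1) (hRc : 0 < Rc)
    (k : ℝ) (hk : k = 2 * N * Real.sqrt ((1 - N ^ 2) / Rc))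
    (w : ℝ → ℝ)
    (hw : w = fun t => (q / (4 * (1 - N ^ 2))) *
      (2 * t + h * (Real.cosh (k * t) - 1 - cothR (k * h / 2) * Real.sinh (k * t)))) :
    ∫ t in (0 : ℝ)..h, w t = 0 := by
  have hk0 : k ≠ 0 := by
    have : 0 < 1 - N ^ 2 := by nlinarith
    rw [hk]
    positivity
  rw [hw, intervalIntegral.integral_const_mul, integral_two_mul_add_cosh_sub_cothR_mul_sinh hk0,
    mul_zero]

/-- The microrotation component of the explicit solution with
pressure-gradient forcing `q` has vanishing average: `∫₀ʰ w = 0`. -/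
theorem integral_w_pressure_forcing
    (N Rc h q : ℝ) (hN0 : 0 < N) (hN1 : N < 1) (hRc : 0 < Rc) (hh : 0 < h)
    (k : ℝ) (hk : k = 2 * N * Real.sqrt ((1 - N ^ 2) / Rc))
    (w : ℝ → ℝ)
    (hw : w = fun t => (q / (4 * (1 - N ^ 2))) *
      (2 * t + h * (Real.cosh (k * t) - 1 - cothR (k * h / 2) * Real.sinh (k * t)))) :
    ∫ t in (0 : ℝ)..h, w t = 0 :=
  integral_w_pressure_forcing_general N Rc h q hN0 hN1 hRc k hk w hw
end

section
/- Let N ∈ (0,1), R_c > 0, h > 0, k = 2N√((1−N²)/R_c) and G ∈ ℝ. Set D = −2h·sinh(kh) + (4N²/k)(cosh(kh) − 1), A₂ = sinh(kh)/D, B₂ = −(cosh(kh) − 1)/D, and let u(t) = G·(−t/(2N²) + (h/(2N²))·(((2N²/k)sinh(kt) − 2t)·A₂ + (2N²/k)(cosh(kt) − 1)·B₂)). Then ∫₀^h u(t) dt = 0. -/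
/-!
With `A₂ = sinh(kh)/D` and `B₂ = -(cosh(kh) - 1)/D`, the `t`-integral of the bracket
multiplying `h/(2N²)` is `(h/2)·D/D = h/2`, which exactly cancels the integral `-h²/(4N²)`
of the linear term.
The only analytic input is `D ≠ 0`: since `N² < 1`, this follows from
`2(cosh x - 1) < x sinh x` for `x > 0`, which after halving the angle is `tanh y < y`.
-/

open Real

lemma sinh_lt_mul_cosh {y : ℝ} (hy : 0 < y) : sinh y < y * cosh y := by
  have hmono : StrictMonoOn (fun t => t * cosh t - sinh t) (Set.Ici 0) := by
    refine strictMonoOn_of_deriv_pos (convex_Ici 0) (by fun_prop) fun t ht => ?_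
    rw [interior_Ici, Set.mem_Ioi] at ht
    have hderiv : HasDerivAt (fun t => t * cosh t - sinh t) (t * sinh t) t := by
      refine (((hasDerivAt_id' t).mul (hasDerivAt_cosh t)).sub (hasDerivAt_sinh t)).congr_deriv ?_
      ring
    rw [hderiv.deriv]
    exact mul_pos ht (sinh_pos_iff.mpr ht)
  simpa using hmono Set.self_mem_Ici hy.le hy

lemma two_mul_cosh_sub_one_lt_mul_sinh {x : ℝ} (hx : 0 < x) : 2 * (cosh x - 1) < x * sinh x := by
  have hy : 0 < x / 2 := half_pos hx
  have hcosh : cosh x - 1 = 2 * sinh (x / 2) ^ 2 := by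
    have := cosh_two_mul (x / 2)
    rw [mul_div_cancel₀ x two_ne_zero, cosh_sq] at this
    linarith
  have hsinh : sinh x = 2 * sinh (x / 2) * cosh (x / 2) := by
    rw [← sinh_two_mul, mul_div_cancel₀ x two_ne_zero]
  rw [hcosh, hsinh]
  have := mul_lt_mul_of_pos_left (sinh_lt_mul_cosh hy) (sinh_pos_iff.mpr hy)
  nlinarith

lemma four_mul_div_mul_cosh_sub_one_lt_two_mul_sinh {c k h : ℝ} (hc : c ≤ 1) (hk : 0 < k)
    (hh : 0 < h) :
    (4 * c / k) * (cosh (k * h) - 1) < 2 * h * sinh (k * h) := by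
  have hkh : 0 < k * h := mul_pos hk hh
  have := two_mul_cosh_sub_one_lt_mul_sinh hkh
  have h1 : 0 ≤ cosh (k * h) - 1 := sub_nonneg.mpr (one_le_cosh _)
  rw [div_mul_eq_mul_div, div_lt_iff₀ hk]
  nlinarith

lemma integral_sinh_cosh_combination {k : ℝ} (hk : k ≠ 0) (c A B h : ℝ) :
    ∫ t in (0 : ℝ)..h,
        (((c / k) * sinh (k * t) - 2 * t) * A + (c / k) * (cosh (k * t) - 1) * B) =
      ((c / k ^ 2) * (cosh (k * h) - 1) - h ^ 2) * A + (c / k) * (sinh (k * h) / k - h) * B := by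
  have hderiv (t : ℝ) : HasDerivAt
      (fun s => ((c / k ^ 2) * cosh (k * s) - s ^ 2) * A + (c / k) * (sinh (k * s) / k - s) * B)
      (((c / k) * sinh (k * t) - 2 * t) * A + (c / k) * (cosh (k * t) - 1) * B) t := by
    have hlin : HasDerivAt (fun s => k * s) k t := by simpa using (hasDerivAt_id' t).const_mul k
    refine ((((hlin.cosh.const_mul (c / k ^ 2)).sub (hasDerivAt_pow 2 t)).mul_const A).add
      ((((hlin.sinh.div_const k).sub (hasDerivAt_id' t)).const_mul (c / k)).mul_const B))
      |>.congr_deriv ?_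
    field_simp
    ring
  rw [intervalIntegral.integral_eq_sub_of_hasDerivAt (fun t _ => hderiv t)
    (Continuous.intervalIntegrable (by fun_prop) _ _)]
  simp only [mul_zero, cosh_zero, sinh_zero, zero_div, sub_zero, zero_pow two_ne_zero]
  ring

/-- The velocity component of the explicit solution with microrotation
forcing `G` has vanishing average: `∫₀ʰ u = 0`. -/
theorem integral_u_microrotation_forcing
    (N Rc h G : ℝ) (hN0 : 0 < N) (hN1 : N < 1) (hRc : 0 < Rc) (hh : 0 < h)
    (k : ℝ) (hk : k = 2 * N * Real.sqrt ((1 - N ^ 2) / Rc))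
    (D A₂ B₂ : ℝ)
    (hD : D = -2 * h * Real.sinh (k * h) + (4 * N ^ 2 / k) * (Real.cosh (k * h) - 1))
    (hA₂ : A₂ = Real.sinh (k * h) / D)
    (hB₂ : B₂ = -(Real.cosh (k * h) - 1) / D)
    (u : ℝ → ℝ)
    (hu : u = fun t => G * (-t / (2 * N ^ 2) + (h / (2 * N ^ 2)) *
      (((2 * N ^ 2 / k) * Real.sinh (k * t) - 2 * t) * A₂ +
        (2 * N ^ 2 / k) * (Real.cosh (k * t) - 1) * B₂))) :
    ∫ t in (0 : ℝ)..h, u t = 0 := by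
  have hN2 : N ^ 2 < 1 := by nlinarith
  have hk0 : 0 < k := hk ▸ mul_pos (by positivity) (sqrt_pos.mpr (div_pos (by linarith) hRc))
  have hD0 : D ≠ 0 := by
    rw [hD]
    linarith [four_mul_div_mul_cosh_sub_one_lt_two_mul_sinh hN2.le hk0 hh]
  have hprofile : ∫ t in (0 : ℝ)..h, (((2 * N ^ 2 / k) * sinh (k * t) - 2 * t) * A₂ +
      (2 * N ^ 2 / k) * (cosh (k * t) - 1) * B₂) = h / 2 := by
    rw [integral_sinh_cosh_combination hk0.ne', hA₂, hB₂]
    field_simp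
    rw [hD]
    field_simp
    ring
  subst hu
  rw [intervalIntegral.integral_const_mul, intervalIntegral.integral_add
      (Continuous.intervalIntegrable (by fun_prop) _ _)
      (Continuous.intervalIntegrable (by fun_prop) _ _),
    intervalIntegral.integral_div, intervalIntegral.integral_neg, integral_id,
    intervalIntegral.integral_const_mul, hprofile]
  field_simp
  ring
end
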